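/- arXiv:0912.0308 — 2 statements merged into one kernel-verified Lean document; each statement's English description precedes it below -/
import Mathlib

section
/- Suppose that G is a finite group and A is a nonempty subset of G. Then ‖1_{A⁻¹}∗μ_A‖_{A(G)} = 1, where A⁻¹ = { a⁻¹ : a ∈ A }. -/
open scoped BigOperators Pointwise

noncomputable section

variable {G : Type*}

/-- Convolution of complex-valued functions on a finite group `G`,
normalized by the Haar probability measure: `f∗g(x) = (1/|G|)·∑ y, f y * g (y⁻¹x)`. -/
def convC [Group G] [Fintype G] (f g : G → ℂ) : G → ℂ :=
  fun x => (Fintype.card G : ℂ)⁻¹ * ∑ y : G, f y * g (y⁻¹ * x)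

/-- The inner product on `L²(μ_G)`: `⟨f,g⟩ = (1/|G|)·∑ x, f x * conj (g x)`. -/
def innerG [Group G] [Fintype G] (f g : G → ℂ) : ℂ :=
  (Fintype.card G : ℂ)⁻¹ * ∑ x : G, f x * (starRingEnd ℂ) (g x)

/-- The `L²(μ_G)` norm. -/
def l2normG [Group G] [Fintype G] (f : G → ℂ) : ℝ :=
  Real.sqrt ((Fintype.card G : ℝ)⁻¹ * ∑ x : G, ‖f x‖ ^ 2)

/-- `‖f‖_{PM(G)}`: operator norm of `v ↦ f ∗ v` on `L²(μ_G)`. -/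
def PMnorm [Group G] [Fintype G] (f : G → ℂ) : ℝ :=
  sSup {r : ℝ | ∃ v : G → ℂ, l2normG v ≤ 1 ∧ r = l2normG (convC f v)}

/-- The algebra norm `‖f‖_{A(G)} = sup{|⟨f,g⟩| : ‖g‖_{PM(G)} ≤ 1}`. -/
def Anorm [Group G] [Fintype G] (f : G → ℂ) : ℝ :=
  sSup {r : ℝ | ∃ g : G → ℂ, PMnorm g ≤ 1 ∧ r = ‖innerG f g‖}

/-- Complex-valued indicator function of a set. -/
def indC (A : Set G) : G → ℂ := Set.indicator A (1 : G → ℂ)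

/-- `μ_A = (|G|/|A|)·1_A`, the density of the uniform probability measure on `A`. -/
def muC [Fintype G] (A : Set G) : G → ℂ :=
  fun x => ((Fintype.card G : ℂ) / (Nat.card A : ℂ)) * indC A x

/-- `μ_G(S) = |S|/|G|`. -/
def density [Fintype G] (S : Set G) : ℝ :=
  (Nat.card S : ℝ) / (Fintype.card G : ℝ)

/-- Real-valued convolution, normalized by `|G|`. -/
def convR [Group G] [Fintype G] (f g : G → ℝ) : G → ℝ :=
  fun x => (Fintype.card G : ℝ)⁻¹ * ∑ y : G, f y * g (y⁻¹ * x)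

/-- Real-valued indicator function of a set. -/
def indR (A : Set G) : G → ℝ := Set.indicator A (1 : G → ℝ)

/-- `μ_A = (|G|/|A|)·1_A`, real-valued. -/
def muR [Fintype G] (A : Set G) : G → ℝ :=
  fun x => ((Fintype.card G : ℝ) / (Nat.card A : ℝ)) * indR A x

/-- The symmetry set `Sym_η(A) = {x : 1_A ∗ 1_{A⁻¹}(x) ≥ η·μ_G(A)}`. -/
def symmSet [Group G] [Fintype G] (A : Set G) (η : ℝ) : Set G :=
  {x : G | η * density A ≤ convR (indR A) (indR A⁻¹) x}

/-- `(B, B′)` is an `ε`-closed, `c`-thick, `r`-multiplicative pair: both are symmetric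
neighbourhoods of the identity, `μ_G(B′) ≥ c·μ_G(B)`, and there are symmetric
neighbourhoods of the identity `B⁺, B⁻` with `B′^r·B⁻·B′^r ⊆ B`, `B′^r·B·B′^r ⊆ B⁺`
and `μ_G(B⁺ \ B⁻) ≤ ε·μ_G(B)`. -/
def IsMultPair [Group G] [Fintype G] (B B' : Set G) (r : ℕ) (ε c : ℝ) : Prop :=
  (1 ∈ B ∧ B⁻¹ = B) ∧ (1 ∈ B' ∧ B'⁻¹ = B') ∧
  c * density B ≤ density B' ∧
  ∃ Bp Bm : Set G, (1 ∈ Bp ∧ Bp⁻¹ = Bp) ∧ (1 ∈ Bm ∧ Bm⁻¹ = Bm) ∧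
    B' ^ r * Bm * B' ^ r ⊆ B ∧ B' ^ r * B * B' ^ r ⊆ Bp ∧
    density (Bp \ Bm) ≤ ε * density B

/-!
Write `u = 1_{A⁻¹}` and `ṽ(t) = conj (μ_A(t⁻¹))`. For `‖g‖_{PM(G)} ≤ 1` the adjoint identity
`⟨u ∗ μ_A, g⟩ = ⟨u, g ∗ ṽ⟩` and Cauchy–Schwarz give `|⟨u ∗ μ_A, g⟩| ≤ ‖u‖₂ ‖ṽ‖₂ = 1`, since
`ṽ = (|G|/|A|)·1_{A⁻¹}`. Conversely `g = μ_{{1}}` acts as the identity, so `‖g‖_{PM(G)} ≤ 1`, and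
`⟨u ∗ μ_A, μ_{{1}}⟩ = (u ∗ μ_A)(1) = 1`.
-/

open scoped ComplexConjugate

def conjInv [Group G] (v : G → ℂ) : G → ℂ := fun t => conj (v t⁻¹)

lemma sum_indC [Fintype G] (S : Set G) : ∑ x, indC S x = Nat.card S := by
  classical
  simp [indC, Set.indicator_apply, Finset.sum_boole, Nat.card_eq_fintype_card]

section
variable [Group G] [Fintype G]

lemma l2normG_eq (f : G → ℂ) :
    l2normG f = √((Fintype.card G : ℝ)⁻¹) * √(∑ x, ‖f x‖ ^ 2) :=
  Real.sqrt_mul (by positivity) _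

lemma l2normG_nonneg (f : G → ℂ) : 0 ≤ l2normG f := Real.sqrt_nonneg _

lemma l2normG_smul (c : ℂ) (f : G → ℂ) : l2normG (c • f) = ‖c‖ * l2normG f := by
  simp only [l2normG_eq, Pi.smul_apply, smul_eq_mul, norm_mul, mul_pow, ← Finset.mul_sum]
  rw [Real.sqrt_mul (by positivity), Real.sqrt_sq (norm_nonneg c)]
  ring

lemma l2normG_le_of_forall_norm_le {f : G → ℂ} {M : ℝ} (hM : 0 ≤ M) (h : ∀ x, ‖f x‖ ≤ M) :
    l2normG f ≤ M := by
  have hsum : ∑ x, ‖f x‖ ^ 2 ≤ Fintype.card G * M ^ 2 := by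
    simpa using Finset.sum_le_card_nsmul Finset.univ _ _
      fun x _ => pow_le_pow_left₀ (norm_nonneg _) (h x) 2
  calc l2normG f ≤ √(M ^ 2) := by
        refine Real.sqrt_le_sqrt ?_
        rwa [inv_mul_le_iff₀ (by exact_mod_cast Fintype.card_pos)]
    _ = M := Real.sqrt_sq hM

lemma norm_innerG_le (f g : G → ℂ) : ‖innerG f g‖ ≤ l2normG f * l2normG g := by
  have hsq := Real.mul_self_sqrt (inv_nonneg.2 (Nat.cast_nonneg (α := ℝ) (Fintype.card G)))
  calc ‖innerG f g‖ ≤ (Fintype.card G : ℝ)⁻¹ * ∑ x, ‖f x‖ * ‖g x‖ := by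
        rw [innerG, norm_mul, norm_inv, Complex.norm_natCast]
        gcongr
        refine (norm_sum_le _ _).trans_eq ?_
        simp only [norm_mul, Complex.norm_conj]
    _ ≤ (Fintype.card G : ℝ)⁻¹ * (√(∑ x, ‖f x‖ ^ 2) * √(∑ x, ‖g x‖ ^ 2)) := by
        gcongr
        exact Real.sum_mul_le_sqrt_mul_sqrt _ _ _
    _ = l2normG f * l2normG g := by
        rw [l2normG_eq, l2normG_eq, mul_mul_mul_comm, hsq]

lemma convC_smul_right (g w : G → ℂ) (c : ℂ) : convC g (c • w) = c • convC g w := by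
  funext x
  simp only [convC, Pi.smul_apply, smul_eq_mul, Finset.mul_sum]
  exact Finset.sum_congr rfl fun y _ => by ring

lemma norm_convC_apply_le (g v : G → ℂ) (x : G) :
    ‖convC g v x‖ ≤ l2normG g * l2normG v := by
  have hconv : convC g v x = innerG g fun y => conj (v (y⁻¹ * x)) := by
    simp only [convC, innerG, Complex.conj_conj]
  have htranslate : l2normG (fun y => conj (v (y⁻¹ * x))) = l2normG v := by
    simp only [l2normG, Complex.norm_conj]
    congr 2
    exact Equiv.sum_comp ((Equiv.inv G).trans (Equiv.mulRight x)) fun y => ‖v y‖ ^ 2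
  rw [hconv, ← htranslate]
  exact norm_innerG_le _ _

lemma l2normG_convC_le_mul (g v : G → ℂ) : l2normG (convC g v) ≤ l2normG g * l2normG v :=
  l2normG_le_of_forall_norm_le (mul_nonneg (l2normG_nonneg g) (l2normG_nonneg v))
    (norm_convC_apply_le g v)

lemma bddAbove_l2normG_convC (g : G → ℂ) :
    BddAbove {r : ℝ | ∃ v : G → ℂ, l2normG v ≤ 1 ∧ r = l2normG (convC g v)} := by
  refine ⟨l2normG g, ?_⟩
  rintro r ⟨v, hv, rfl⟩
  calc l2normG (convC g v) ≤ l2normG g * l2normG v := l2normG_convC_le_mul g v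
    _ ≤ l2normG g := mul_le_of_le_one_right (l2normG_nonneg g) hv

lemma l2normG_convC_le (g w : G → ℂ) : l2normG (convC g w) ≤ PMnorm g * l2normG w := by
  rcases (l2normG_nonneg w).eq_or_lt with hw | hw
  · simpa [← hw] using l2normG_convC_le_mul g w
  set c := l2normG w
  have hc : ‖(c : ℂ)⁻¹‖ = c⁻¹ := by
    rw [norm_inv, Complex.norm_real, Real.norm_of_nonneg hw.le]
  have hle : l2normG (convC g ((c : ℂ)⁻¹ • w)) ≤ PMnorm g := by
    refine le_csSup (bddAbove_l2normG_convC g) ⟨_, ?_, rfl⟩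
    rw [l2normG_smul, hc, inv_mul_cancel₀ hw.ne']
  rw [convC_smul_right, l2normG_smul, hc] at hle
  rwa [inv_mul_le_iff₀ hw, mul_comm] at hle

lemma innerG_convC_eq_innerG_convC_conjInv (u v g : G → ℂ) :
    innerG (convC u v) g = innerG u (convC g (conjInv v)) := by
  simp only [innerG, convC, conjInv, map_mul, map_sum, map_inv₀, map_natCast, Complex.conj_conj,
    mul_inv_rev, inv_inv, Finset.mul_sum, Finset.sum_mul]
  rw [Finset.sum_comm]
  exact Finset.sum_congr rfl fun x _ => Finset.sum_congr rfl fun y _ => by ring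

lemma norm_innerG_convC_le (u v g : G → ℂ) :
    ‖innerG (convC u v) g‖ ≤ PMnorm g * (l2normG (conjInv v) * l2normG u) := by
  rw [innerG_convC_eq_innerG_convC_conjInv]
  calc ‖innerG u (convC g (conjInv v))‖ ≤ l2normG u * l2normG (convC g (conjInv v)) :=
        norm_innerG_le _ _
    _ ≤ l2normG u * (PMnorm g * l2normG (conjInv v)) :=
        mul_le_mul_of_nonneg_left (l2normG_convC_le _ _) (l2normG_nonneg u)
    _ = PMnorm g * (l2normG (conjInv v) * l2normG u) := by ring

lemma l2normG_indC (S : Set G) : l2normG (indC S) = √(Nat.card S / Fintype.card G) := by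
  classical
  have hsum : ∑ x, ‖indC S x‖ ^ 2 = Nat.card S := by
    simp [indC, Set.indicator_apply, apply_ite, Finset.sum_boole, Nat.card_eq_fintype_card]
  rw [l2normG, hsum, inv_mul_eq_div]

lemma conjInv_muC (A : Set G) :
    conjInv (muC A) = ((Fintype.card G : ℂ) / Nat.card A) • indC A⁻¹ := by
  classical
  funext x
  by_cases hx : x⁻¹ ∈ A <;> simp [conjInv, muC, indC, hx]

lemma l2normG_conjInv_muC_mul_l2normG_indC_inv {A : Set G} (hA : A.Nonempty) :
    l2normG (conjInv (muC A)) * l2normG (indC A⁻¹) = 1 := by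
  have : Nonempty A := hA.to_subtype
  have hA : (0 : ℝ) < Nat.card A := by exact_mod_cast Nat.card_pos
  have hG : (0 : ℝ) < Fintype.card G := by exact_mod_cast Fintype.card_pos
  rw [conjInv_muC, l2normG_smul, mul_assoc, l2normG_indC, Set.natCard_inv,
    Real.mul_self_sqrt (by positivity), norm_div, Complex.norm_natCast, Complex.norm_natCast]
  field_simp

lemma convC_indC_inv_muC_apply_one {A : Set G} (hA : A.Nonempty) :
    convC (indC A⁻¹) (muC A) 1 = 1 := by
  classical
  have : Nonempty A := hA.to_subtype
  have hA : (Nat.card A : ℂ) ≠ 0 := by exact_mod_cast Nat.card_pos.ne'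
  have hG : (Fintype.card G : ℂ) ≠ 0 := by exact_mod_cast Fintype.card_pos.ne'
  have hterm (y : G) :
      indC A⁻¹ y * muC A (y⁻¹ * 1) = (Fintype.card G / Nat.card A) * indC A⁻¹ y := by
    by_cases hy : y⁻¹ ∈ A <;> simp [muC, indC, hy]
  simp only [convC, hterm, ← Finset.mul_sum, sum_indC, Set.natCard_inv]
  field_simp

lemma muC_singleton_one_apply [DecidableEq G] (x : G) :
    muC ({1} : Set G) x = if x = 1 then (Fintype.card G : ℂ) else 0 := by
  simp [muC, indC, Set.indicator_apply]

lemma convC_muC_singleton_one (p : G → ℂ) : convC (muC {1}) p = p := by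
  classical
  funext x
  simp [convC, muC_singleton_one_apply]

lemma innerG_muC_singleton_one (f : G → ℂ) : innerG f (muC {1}) = f 1 := by
  classical
  simp [innerG, muC_singleton_one_apply, apply_ite (starRingEnd ℂ), mul_comm (f _)]

lemma PMnorm_muC_singleton_one_le : PMnorm (muC ({1} : Set G)) ≤ 1 := by
  refine csSup_le ⟨_, 0, ?_, rfl⟩ ?_
  · simp [l2normG]
  · rintro r ⟨v, hv, rfl⟩
    rwa [convC_muC_singleton_one]

end

/-- `‖1_{A⁻¹} ∗ μ_A‖_{A(G)} = 1` for every nonempty `A ⊆ G`. -/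
theorem Anorm_conv_inv_indicator_mu {G : Type*} [Group G] [Fintype G]
    (A : Set G) (hA : A.Nonempty) :
    Anorm (convC (indC A⁻¹) (muC A)) = 1 := by
  have hbound (g : G → ℂ) (hg : PMnorm g ≤ 1) : ‖innerG (convC (indC A⁻¹) (muC A)) g‖ ≤ 1 :=
    calc _ ≤ PMnorm g * (l2normG (conjInv (muC A)) * l2normG (indC A⁻¹)) :=
          norm_innerG_convC_le _ _ _
      _ ≤ 1 := by rwa [l2normG_conjInv_muC_mul_l2normG_indC_inv hA, mul_one]
  have hattain : ‖innerG (convC (indC A⁻¹) (muC A)) (muC {1})‖ = 1 := by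
    rw [innerG_muC_singleton_one, convC_indC_inv_muC_apply_one hA, norm_one]
  refine IsGreatest.csSup_eq ⟨⟨muC {1}, PMnorm_muC_singleton_one_le, hattain.symm⟩, ?_⟩
  rintro r ⟨g, hg, rfl⟩
  exact hbound g hg
end
end

section
/- Approximate projection onto high-threshold symmetry sets: Suppose that G is a finite group, A ⊆ G is nonempty and ε ∈ (0,1]. Then for every probability density ν : G → ℝ≥0 (i.e. (1/|G|)·∑_{x∈G} ν(x) = 1) with support contained in Sym_{1−ε}(A), one has (1/|A|)·∑_{x∈A} |1 − ν∗1_A(x)| ≤ ε. -/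
open scoped BigOperators Pointwise

noncomputable section

variable {G : Type*}

/-! On `A` the convolution `ν ∗ 1_A` takes values in `[0, 1]`, so the left-hand side equals
`1 - ⟨1_A, ν ∗ 1_A⟩ / |A|`. Moving the convolution across the sum turns `⟨1_A, ν ∗ 1_A⟩` into
the `ν`-average of `1_A ∗ 1_{A⁻¹}`, which is at least `(1 - ε) μ_G(A)` on the support of `ν`. -/

lemma mul_sum_le_sum_mul_of_le_on_support {ι : Type*} (s : Finset ι) {ν F : ι → ℝ} {c : ℝ}
    (hν : ∀ i, 0 ≤ ν i) (hF : ∀ i, ν i ≠ 0 → c ≤ F i) :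
    c * ∑ i ∈ s, ν i ≤ ∑ i ∈ s, ν i * F i := by
  rw [Finset.mul_sum]
  refine Finset.sum_le_sum fun i _ => ?_
  by_cases hi : ν i = 0
  · simp [hi]
  · rw [mul_comm]
    exact mul_le_mul_of_nonneg_left (hF i hi) (hν i)

lemma indR_le_one (A : Set G) (x : G) : indR A x ≤ 1 :=
  Set.indicator_le_self' (fun _ _ => zero_le_one) x

lemma indR_inv [Group G] (A : Set G) : indR A⁻¹ = fun z => indR A z⁻¹ := rfl

lemma sum_indR [Fintype G] (A : Set G) : ∑ x : G, indR A x = Nat.card A := by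
  classical
  simp [indR, Set.indicator_apply, Finset.sum_boole, Nat.card_eq_fintype_card,
    Fintype.card_subtype]

section

variable [Group G] [Fintype G]

lemma convR_le_mean {f g : G → ℝ} (hf : ∀ x, 0 ≤ f x) (hg : ∀ x, g x ≤ 1) (x : G) :
    convR f g x ≤ (Fintype.card G : ℝ)⁻¹ * ∑ y, f y :=
  mul_le_mul_of_nonneg_left
    (Finset.sum_le_sum fun y _ => mul_le_of_le_one_right (hf y) (hg _)) (by positivity)

lemma sum_mul_convR (f g h : G → ℝ) :
    ∑ x, h x * convR f g x = ∑ y, f y * convR h (fun z => g z⁻¹) y := by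
  simp only [convR, Finset.mul_sum, mul_inv_rev, inv_inv]
  rw [Finset.sum_comm]
  refine Finset.sum_congr rfl fun y _ => Finset.sum_congr rfl fun x _ => ?_
  ring

variable {A : Set G} {ν : G → ℝ}

lemma sum_indicator_abs_one_sub_convR (hν0 : ∀ x, 0 ≤ ν x)
    (hν1 : (Fintype.card G : ℝ)⁻¹ * ∑ x : G, ν x = 1) :
    ∑ x : G, Set.indicator A (fun x => |1 - convR ν (indR A) x|) x
      = Nat.card A - ∑ x, indR A x * convR ν (indR A) x := by
  rw [← sum_indR, ← Finset.sum_sub_distrib]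
  refine Finset.sum_congr rfl fun x _ => ?_
  have hle : convR ν (indR A) x ≤ 1 := hν1 ▸ convR_le_mean hν0 (indR_le_one A) x
  by_cases hx : x ∈ A
  · rw [Set.indicator_of_mem hx, abs_of_nonneg (sub_nonneg.2 hle)]
    simp [indR, hx]
  · simp [indR, hx]

lemma mul_card_le_sum_indR_mul_convR {η : ℝ} (hν0 : ∀ x, 0 ≤ ν x)
    (hν1 : (Fintype.card G : ℝ)⁻¹ * ∑ x : G, ν x = 1)
    (hsupp : ∀ x, ν x ≠ 0 → x ∈ symmSet A η) :
    η * Nat.card A ≤ ∑ x, indR A x * convR ν (indR A) x := by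
  have hN : (Fintype.card G : ℝ) ≠ 0 := by positivity
  have hmass : ∑ x : G, ν x = Fintype.card G := by
    rw [inv_mul_eq_one₀ hN] at hν1; exact hν1.symm
  rw [sum_mul_convR, ← indR_inv]
  calc η * Nat.card A = η * density A * ∑ x : G, ν x := by
        rw [hmass, density]; field_simp
    _ ≤ _ := mul_sum_le_sum_mul_of_le_on_support _ hν0 hsupp

end

theorem symmSet_approx_projection_general {G : Type*} [Group G] [Fintype G]
    (A : Set G) (hA : A.Nonempty) (ε : ℝ)
    (ν : G → ℝ) (hν0 : ∀ x, 0 ≤ ν x)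
    (hν1 : (Fintype.card G : ℝ)⁻¹ * ∑ x : G, ν x = 1)
    (hsupp : ∀ x, ν x ≠ 0 → x ∈ symmSet A (1 - ε)) :
    (Nat.card A : ℝ)⁻¹ *
        ∑ x : G, Set.indicator A (fun x => |1 - convR ν (indR A) x|) x ≤ ε := by
  have hcard : (0 : ℝ) < Nat.card A := by
    have := hA.to_subtype
    exact_mod_cast Nat.card_pos
  rw [sum_indicator_abs_one_sub_convR hν0 hν1, inv_mul_le_iff₀ hcard]
  linarith [mul_card_le_sum_indR_mul_convR hν0 hν1 hsupp]

/-- Approximate projection: probability densities supported on `Sym_{1−ε}(A)`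
almost fix `1_A` under convolution. -/
theorem symmSet_approx_projection {G : Type*} [Group G] [Fintype G]
    (A : Set G) (hA : A.Nonempty) (ε : ℝ) (hε0 : 0 < ε) (hε1 : ε ≤ 1)
    (ν : G → ℝ) (hν0 : ∀ x, 0 ≤ ν x)
    (hν1 : (Fintype.card G : ℝ)⁻¹ * ∑ x : G, ν x = 1)
    (hsupp : ∀ x, ν x ≠ 0 → x ∈ symmSet A (1 - ε)) :
    (Nat.card A : ℝ)⁻¹ *
        ∑ x : G, Set.indicator A (fun x => |1 - convR ν (indR A) x|) x ≤ ε :=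
  symmSet_approx_projection_general A hA ε ν hν0 hν1 hsupp
end
end
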